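/- arXiv:1901.07443 — 2 statements merged into one kernel-verified Lean document; each statement's English description precedes it below -/
import Mathlib

section
/- Uniqueness of inversion-maximizers containing a given vertex set: if S is a subset of the vertices of the order polytope O(Z_n) that is contained in vert(σ) for some alternating permutation σ, then there is a unique alternating permutation maximizing inversion number among all alternating permutations τ with S ⊆ vert(τ). -/
open Finset

/-- `σ` (0-indexed) is an alternating permutation: `σ 0 < σ 1 > σ 2 < …`. -/
def IsAlternating {n : ℕ} (σ : Equiv.Perm (Fin n)) : Prop :=
  ∀ i j : Fin n, (j : ℕ) = (i : ℕ) + 1 →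
    ((Even (i : ℕ) → σ i < σ j) ∧ (Odd (i : ℕ) → σ j < σ i))

/-- `k` (a 1-indexed value, `1 ≤ k ≤ n-1`) is a swap of `σ`:
writing `i, j` for the 0-indexed values `k-1, k`, we have `σ⁻¹(k) < σ⁻¹(k+1) - 1`. -/
def IsSwap {n : ℕ} (σ : Equiv.Perm (Fin n)) (k : ℕ) : Prop :=
  ∃ i j : Fin n, (i : ℕ) + 1 = k ∧ (j : ℕ) = k ∧ ((σ.symm i : ℕ) + 1 < (σ.symm j : ℕ))

instance {n : ℕ} (σ : Equiv.Perm (Fin n)) : DecidablePred (IsSwap σ) := fun k => by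
  unfold IsSwap; infer_instance

/-- The set of swaps of `σ` (as 1-indexed values). -/
def swapSet {n : ℕ} (σ : Equiv.Perm (Fin n)) : Finset ℕ :=
  (Finset.range n).filter (fun k => IsSwap σ k)

/-- The number of swaps of `σ`. -/
def swapCount {n : ℕ} (σ : Equiv.Perm (Fin n)) : ℕ := (swapSet σ).card

/-- Number of inversions of `σ`. -/
def invNum {n : ℕ} (σ : Equiv.Perm (Fin n)) : ℕ :=
  (Finset.univ.filter (fun p : Fin n × Fin n => p.1 < p.2 ∧ σ p.2 < σ p.1)).card

/-- The vertex `v_k^σ` (for `0 ≤ k ≤ n`): all-ones minus the sum of `e_{σ⁻¹(m)}`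
for the first `k` values `m`. -/
def vtx {n : ℕ} (σ : Equiv.Perm (Fin n)) (k : ℕ) : Fin n → ℕ :=
  fun j => if (σ j : ℕ) < k then 0 else 1

/-- The vertex set `vert(σ) = {v_0^σ, …, v_n^σ}` of the simplex `Δ^σ`. -/
def vert {n : ℕ} (σ : Equiv.Perm (Fin n)) : Finset (Fin n → ℕ) :=
  (Finset.range (n + 1)).image (vtx σ)

/-- The exclusion set of `σ`: vertices `v_k^σ` with `k` a swap of `σ`. -/
def excl {n : ℕ} (σ : Equiv.Perm (Fin n)) : Finset (Fin n → ℕ) :=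
  (((Finset.range (n + 1)).filter (fun k => IsSwap σ k))).image (vtx σ)

/-- `σ` swaps to `τ`: `τ` is obtained from `σ` by exchanging two consecutive values
`i < j = i+1` (0-indexed) at a swap position. -/
def SwapsTo {n : ℕ} (σ τ : Equiv.Perm (Fin n)) : Prop :=
  ∃ i j : Fin n, (j : ℕ) = (i : ℕ) + 1 ∧ ((σ.symm i : ℕ) + 1 < (σ.symm j : ℕ)) ∧
    τ = Equiv.swap i j * σ

/-- The order relation of the zig-zag poset `Z_n` (0-indexed): even indices are minimal,
odd indices are maximal, and an even index lies below its odd neighbours. -/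
def zigzagLE {n : ℕ} (i j : Fin n) : Prop :=
  i = j ∨ (Odd (j : ℕ) ∧ ((i : ℕ) + 1 = (j : ℕ) ∨ (i : ℕ) = (j : ℕ) + 1))

/-- A (down-closed) order ideal of the zig-zag poset `Z_n`. -/
def IsOrderIdeal {n : ℕ} (I : Finset (Fin n)) : Prop :=
  ∀ i j : Fin n, zigzagLE i j → j ∈ I → i ∈ I

/-- The Euler zig-zag number: the number of alternating permutations of length `n`. -/
noncomputable def eulerZigzag (n : ℕ) : ℕ := Nat.card {σ : Equiv.Perm (Fin n) // IsAlternating σ}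

/-!
If a maximizer `τ` had a swap `k` with `v_k^τ ∉ S`, exchanging the values `k - 1` and `k` would
keep `τ` alternating, change no vertex but `v_k^τ`, and add one inversion. So every maximizer
satisfies `excl τ ⊆ S`, and two alternating `τ, τ'` with `excl ⊆ S ⊆ vert` coincide.
Otherwise let `k` be the largest value with `τ⁻¹ k ≠ τ'⁻¹ k`, say `p := τ⁻¹ k < τ'⁻¹ k`; then
`τ` and `τ'` agree on which positions carry values above `k`, so `a := τ' p < k`. For
`a < m ≤ k` the vertex `v_m^{τ'}` vanishes at `p` and `v_m^τ` does not; as a vertex is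
determined by its number of zeros, `v_m^{τ'} ∉ vert τ ⊇ S`, so `m` is not a swap of `τ'`.
Hence the positions `τ'⁻¹ a = p, …, τ'⁻¹ k > p` increase by at most one per step, and `τ'`
takes two consecutive values `m, m + 1` at `p, p + 1`. Alternation of `τ'` forces `p` even,
and then alternation of `τ` gives `k = τ p < τ (p + 1) ≤ k`.
-/

open Equiv

lemma exists_crossing_of_step_le_one {f : ℕ → ℕ} {a k c : ℕ} (hak : a < k)
    (ha : f a ≤ c) (hk : c < f k) (hstep : ∀ m, a ≤ m → m < k → f (m + 1) ≤ f m + 1) :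
    ∃ m, a ≤ m ∧ m < k ∧ f m = c ∧ f (m + 1) = c + 1 := by
  induction k, hak using Nat.le_induction with
  | base =>
    change c < f (a + 1) at hk
    have := hstep a le_rfl (by omega)
    exact ⟨a, le_rfl, by omega, by omega, by omega⟩
  | succ k hak ih =>
    by_cases hck : c < f k
    · obtain ⟨m, ham, hmk, hm⟩ := ih hck fun m h₁ h₂ => hstep m h₁ (by omega)
      exact ⟨m, ham, by omega, hm⟩
    · have := hstep k (by omega) (by omega)
      exact ⟨k, by omega, by omega, by omega, by omega⟩

variable {n : ℕ} {S : Finset (Fin n → ℕ)}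

lemma card_filter_apply_lt (τ : Perm (Fin n)) {m : ℕ} (hm : m ≤ n) :
    #{x | (τ x : ℕ) < m} = m := by
  rw [card_equiv τ (t := {i : Fin n | (i : ℕ) < m}) (by simp), Fin.card_filter_val_lt,
    min_eq_right hm]

lemma vtx_apply_eq_zero_iff (τ : Perm (Fin n)) (m : ℕ) (x : Fin n) :
    vtx τ m x = 0 ↔ (τ x : ℕ) < m := by
  simp [vtx]

lemma vtx_eq_of_mem_vert {τ τ' : Perm (Fin n)} {m : ℕ} (hm : m ≤ n) (h : vtx τ' m ∈ vert τ) :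
    vtx τ m = vtx τ' m := by
  obtain ⟨l, hl, hl_eq⟩ := mem_image.mp h
  have hzeros : univ.filter (fun x => (τ x : ℕ) < l) = univ.filter (fun x => (τ' x : ℕ) < m) := by
    ext x
    simp only [mem_filter, mem_univ, true_and, ← vtx_apply_eq_zero_iff, hl_eq]
  have hlm : l = m := by
    rw [← card_filter_apply_lt τ (Nat.lt_succ_iff.mp (mem_range.mp hl)), hzeros,
      card_filter_apply_lt τ' hm]
  rwa [hlm] at hl_eq

lemma vtx_mem_excl {τ : Perm (Fin n)} {k : ℕ} (hk : IsSwap τ k) : vtx τ k ∈ excl τ := by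
  obtain ⟨i, j, hi, rfl, hpos⟩ := hk
  exact mem_image_of_mem _ (mem_filter.mpr ⟨mem_range.mpr (by omega), i, j, hi, rfl, hpos⟩)

section SwapStep

variable {σ : Perm (Fin n)} {i j : Fin n}

lemma swap_apply_lt_swap_apply_iff (hij : (j : ℕ) = i + 1) (a b : Fin n) :
    swap i j a < swap i j b ↔ (a < b ∧ ¬(a = i ∧ b = j)) ∨ (a = j ∧ b = i) := by
  simp only [swap_apply_def, Fin.lt_def, Fin.ext_iff]
  split_ifs <;> omega

lemma vtx_swap_mul_of_ne (hij : (j : ℕ) = i + 1) {m : ℕ} (hm : m ≠ j) :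
    vtx (swap i j * σ) m = vtx σ m := by
  funext x
  simp only [vtx, Perm.mul_apply, swap_apply_def]
  split_ifs <;> omega

lemma IsAlternating.swap_mul (hσ : IsAlternating σ) (hij : (j : ℕ) = i + 1)
    (hpos : (σ.symm i : ℕ) + 1 < σ.symm j) : IsAlternating (swap i j * σ) := by
  have hkeep : ∀ u v : Fin n, ((u : ℕ) + 1 = v ∨ (v : ℕ) + 1 = u) →
      ((swap i j * σ) u < (swap i j * σ) v ↔ σ u < σ v) := by
    intro u v huv
    rw [Perm.mul_apply, Perm.mul_apply, swap_apply_lt_swap_apply_iff hij]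
    constructor
    · rintro (⟨hlt, -⟩ | ⟨hu, hv⟩)
      · exact hlt
      · rw [← hu, ← hv, symm_apply_apply, symm_apply_apply] at hpos
        omega
    · refine fun hlt => Or.inl ⟨hlt, ?_⟩
      rintro ⟨hu, hv⟩
      rw [← hu, ← hv, symm_apply_apply, symm_apply_apply] at hpos
      omega
  intro x y hxy
  exact ⟨fun he => (hkeep x y (by omega)).2 ((hσ x y hxy).1 he),
    fun ho => (hkeep y x (by omega)).2 ((hσ x y hxy).2 ho)⟩

lemma invNum_swap_mul (hij : (j : ℕ) = i + 1) (hpos : σ.symm i < σ.symm j) :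
    invNum (swap i j * σ) = invNum σ + 1 := by
  have hinv : univ.filter (fun r : Fin n × Fin n => r.1 < r.2 ∧
        (swap i j * σ) r.2 < (swap i j * σ) r.1) =
      insert (σ.symm i, σ.symm j)
        (univ.filter fun r : Fin n × Fin n => r.1 < r.2 ∧ σ r.2 < σ r.1) := by
    ext ⟨u, v⟩
    simp only [mem_filter, mem_univ, true_and, mem_insert, Prod.mk.injEq, Perm.mul_apply,
      swap_apply_lt_swap_apply_iff hij, eq_symm_apply]
    constructor
    · rintro ⟨huv, ⟨hlt, -⟩ | ⟨hv, hu⟩⟩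
      · exact Or.inr ⟨huv, hlt⟩
      · exact Or.inl ⟨hu, hv⟩
    · rintro (⟨hu, hv⟩ | ⟨huv, hlt⟩)
      · rw [← hu, ← hv, symm_apply_apply, symm_apply_apply] at hpos
        exact ⟨hpos, Or.inr ⟨hv, hu⟩⟩
      · refine ⟨huv, Or.inl ⟨hlt, ?_⟩⟩
        rintro ⟨hv, hu⟩
        rw [← hu, ← hv, symm_apply_apply, symm_apply_apply] at hpos
        exact lt_asymm huv hpos
  rw [invNum, invNum, hinv, card_insert_of_notMem]
  simp only [mem_filter, mem_univ, true_and, apply_symm_apply, not_and, not_lt]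
  exact fun _ => Fin.le_def.mpr (by omega)

end SwapStep

lemma IsAlternating.exists_invNum_lt {τ : Perm (Fin n)} (hτ : IsAlternating τ)
    (hS : S ⊆ vert τ) {k : ℕ} (hk : IsSwap τ k) (hkS : vtx τ k ∉ S) :
    ∃ τ₂ : Perm (Fin n), IsAlternating τ₂ ∧ S ⊆ vert τ₂ ∧ invNum τ < invNum τ₂ := by
  obtain ⟨i, j, hi, hj, hpos⟩ := hk
  have hij : (j : ℕ) = i + 1 := by omega
  refine ⟨swap i j * τ, hτ.swap_mul hij hpos, fun s hs => ?_, ?_⟩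
  · obtain ⟨m, hm, rfl⟩ := mem_image.mp (hS hs)
    have hmj : m ≠ j := by rintro rfl; exact hkS (hj ▸ hs)
    rw [← vtx_swap_mul_of_ne hij hmj]
    exact mem_image_of_mem _ hm
  · rw [invNum_swap_mul hij (Fin.lt_def.mpr (by omega))]
    exact Nat.lt_succ_self _

lemma excl_subset_of_forall_invNum_le {ρ : Perm (Fin n)} (hρ : IsAlternating ρ)
    (hS : S ⊆ vert ρ)
    (hmax : ∀ τ : Perm (Fin n), IsAlternating τ → S ⊆ vert τ → invNum τ ≤ invNum ρ) :
    excl ρ ⊆ S := by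
  intro v hv
  obtain ⟨k, hk, rfl⟩ := mem_image.mp hv
  by_contra hkS
  obtain ⟨τ, hτ, hSτ, hlt⟩ := hρ.exists_invNum_lt hS (mem_filter.mp hk).2 hkS
  exact (hmax τ hτ hSτ).not_gt hlt

lemma not_isSwap_of_apply_lt_le_apply {τ τ' : Perm (Fin n)} (hSτ : S ⊆ vert τ)
    (hτ'S : excl τ' ⊆ S) {p : Fin n} {m : ℕ} (h₁ : (τ' p : ℕ) < m) (h₂ : m ≤ τ p) :
    ¬IsSwap τ' m := by
  intro hswap
  have hm := congrFun (vtx_eq_of_mem_vert (by omega) (hSτ (hτ'S (vtx_mem_excl hswap)))) p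
  simp [vtx, h₁, not_lt.mpr h₂] at hm

lemma symm_succ_le_of_not_isSwap {τ : Perm (Fin n)} {m : ℕ} (hm : m + 1 < n)
    (h : ¬IsSwap τ (m + 1)) : (τ.symm ⟨m + 1, hm⟩ : ℕ) ≤ τ.symm ⟨m, by omega⟩ + 1 := by
  simp only [IsSwap, not_exists, not_and, not_lt] at h
  exact h _ _ rfl rfl

lemma symm_le_symm_of_excl_subset {τ τ' : Perm (Fin n)} (hτ : IsAlternating τ)
    (hτ' : IsAlternating τ') (hSτ : S ⊆ vert τ) (hτ'S : excl τ' ⊆ S) {k : Fin n}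
    (hk : ∀ x, k < τ x ↔ k < τ' x) : τ'.symm k ≤ τ.symm k := by
  by_contra! hlt
  set p := τ.symm k
  have hτp : τ p = k := apply_symm_apply τ k
  have hτ'p : τ' p < k := by
    have hle : τ' p ≤ k := not_lt.mp fun h => ((hk p).2 h).ne' hτp
    exact lt_of_le_of_ne hle fun h => hlt.ne (by rw [← h, symm_apply_apply])
  let q : ℕ → ℕ := fun m => if h : m < n then τ'.symm ⟨m, h⟩ else 0
  have hq : ∀ m (h : m < n), q m = τ'.symm ⟨m, h⟩ := fun m h => dif_pos h
  have hstep : ∀ m, (τ' p : ℕ) ≤ m → m < k → q (m + 1) ≤ q m + 1 := by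
    intro m h₁ h₂
    rw [hq m (by omega), hq (m + 1) (by omega)]
    refine symm_succ_le_of_not_isSwap _ (not_isSwap_of_apply_lt_le_apply hSτ hτ'S (p := p) ?_ ?_)
    · omega
    · rw [hτp]; omega
  obtain ⟨m, -, hmk, hm, hm₁⟩ := exists_crossing_of_step_le_one (f := q) (c := p)
    hτ'p (by rw [hq _ (τ' p).isLt]; simp) (by rw [hq _ k.isLt]; exact hlt) hstep
  rw [hq m (by omega)] at hm
  rw [hq (m + 1) (by omega)] at hm₁
  set y := τ'.symm ⟨m + 1, by omega⟩
  have hτ'p' : τ' p = ⟨m, by omega⟩ := by rw [← Fin.ext hm, apply_symm_apply]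
  have hτ'y : τ' y = ⟨m + 1, by omega⟩ := apply_symm_apply _ _
  rcases Nat.even_or_odd p with hp | hp
  · have hky : k < τ y := hτp ▸ (hτ p y hm₁).1 hp
    have := Fin.lt_def.mp ((hk y).1 hky)
    rw [hτ'y] at this
    simp only at this
    omega
  · have := Fin.lt_def.mp ((hτ' p y hm₁).2 hp)
    rw [hτ'p', hτ'y] at this
    simp only at this
    omega

lemma IsAlternating.eq_of_excl_subset {τ τ' : Perm (Fin n)} (hτ : IsAlternating τ)
    (hτ' : IsAlternating τ') (hSτ : S ⊆ vert τ) (hSτ' : S ⊆ vert τ') (hτS : excl τ ⊆ S)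
    (hτ'S : excl τ' ⊆ S) : τ = τ' := by
  have hlevel : ∀ k ≤ n, ∀ x, k ≤ (τ x : ℕ) ↔ k ≤ (τ' x : ℕ) := by
    intro k hk
    induction hk using Nat.decreasingInduction with
    | self => exact fun x => by omega
    | of_succ k hk ih =>
      have hgt : ∀ x, (⟨k, hk⟩ : Fin n) < τ x ↔ ⟨k, hk⟩ < τ' x := ih
      have hsymm : τ.symm ⟨k, hk⟩ = τ'.symm ⟨k, hk⟩ :=
        le_antisymm (symm_le_symm_of_excl_subset hτ' hτ hSτ' hτS fun x => (hgt x).symm)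
          (symm_le_symm_of_excl_subset hτ hτ' hSτ hτ'S hgt)
      intro x
      have hx : τ x = ⟨k, hk⟩ ↔ τ' x = ⟨k, hk⟩ := by
        rw [← eq_symm_apply, ← eq_symm_apply, hsymm]
      simp only [Fin.ext_iff] at hx
      have := ih x
      omega
  ext x
  have h₁ := (hlevel (τ x) (τ x).isLt.le x).1 le_rfl
  have h₂ := (hlevel (τ' x) (τ' x).isLt.le x).2 le_rfl
  omega

/-- if `S` is contained in the vertex set of some alternating permutation,
then there is a unique alternating permutation maximizing the inversion number among all
alternating permutations whose vertex set contains `S`. -/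
theorem unique_max_inversion_containing (n : ℕ) (S : Finset (Fin n → ℕ))
    (σ : Equiv.Perm (Fin n)) (hσ : IsAlternating σ) (hS : S ⊆ vert σ) :
    ∃! ρ : Equiv.Perm (Fin n), IsAlternating ρ ∧ S ⊆ vert ρ ∧
      ∀ τ : Equiv.Perm (Fin n), IsAlternating τ → S ⊆ vert τ → invNum τ ≤ invNum ρ := by
  classical
  obtain ⟨ρ, hρ, hρmax⟩ := exists_max_image
    (univ.filter fun τ : Perm (Fin n) => IsAlternating τ ∧ S ⊆ vert τ) invNum
    ⟨σ, by simp [hσ, hS]⟩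
  simp only [mem_filter, mem_univ, true_and] at hρ hρmax
  have hmax : ∀ τ : Perm (Fin n), IsAlternating τ → S ⊆ vert τ → invNum τ ≤ invNum ρ :=
    fun τ h₁ h₂ => hρmax τ ⟨h₁, h₂⟩
  refine ⟨ρ, ⟨hρ.1, hρ.2, hmax⟩, fun ρ' ⟨hρ', hSρ', hmax'⟩ => ?_⟩
  exact hρ'.eq_of_excl_subset hρ.1 hSρ' hρ.2 (excl_subset_of_forall_invNum_le hρ' hSρ' hmax')
    (excl_subset_of_forall_invNum_le hρ.1 hρ.2 hmax)
end

section
/- Distinct alternating permutations with equal inversion number have distinct exclusion sets in the strong sense: if σ ≠ τ are alternating permutations of length n with inv(σ) = inv(τ), then excl(σ) is not contained in vert(τ). -/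
open Finset

section Aux

open Equiv

/-- `σ` and `τ` have the same set of positions of values `< j`. -/
def sameA {n : ℕ} (σ τ : Equiv.Perm (Fin n)) (j : ℕ) : Prop :=
  ∀ t : Fin n, ((σ t : ℕ) < j ↔ (τ t : ℕ) < j)

lemma isSwap_iff {n : ℕ} (ρ : Equiv.Perm (Fin n)) (k : ℕ) :
    IsSwap ρ k ↔ ∃ (h1 : 1 ≤ k) (h2 : k < n),
      (ρ.symm ⟨k - 1, by omega⟩ : ℕ) + 1 < (ρ.symm ⟨k, h2⟩ : ℕ) := by
  constructor
  · rintro ⟨i, j, hi, hj, hlt⟩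
    have h1 : 1 ≤ k := by omega
    have h2 : k < n := hj ▸ j.isLt
    refine ⟨h1, h2, ?_⟩
    have e1 : (⟨k - 1, by omega⟩ : Fin n) = i := Fin.ext (by simp; omega)
    have e2 : (⟨k, h2⟩ : Fin n) = j := Fin.ext (by simp; omega)
    rw [e1, e2]; exact hlt
  · rintro ⟨h1, h2, hlt⟩
    exact ⟨⟨k - 1, by omega⟩, ⟨k, h2⟩, by simp; omega, rfl, hlt⟩

lemma card_val_lt {n : ℕ} (k : ℕ) (hk : k ≤ n) :
    (Finset.univ.filter (fun v : Fin n => (v : ℕ) < k)).card = k := by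
  have h : (Finset.univ.filter (fun v : Fin n => (v : ℕ) < k)).map Fin.valEmbedding
      = Finset.range k := by
    ext l
    simp only [Finset.mem_map, Finset.mem_filter, Finset.mem_univ, true_and,
      Fin.valEmbedding_apply, Finset.mem_range]
    constructor
    · rintro ⟨v, hv, rfl⟩; exact hv
    · intro hl; exact ⟨⟨l, by omega⟩, hl, rfl⟩
  have hc := congrArg Finset.card h
  rwa [Finset.card_map, Finset.card_range] at hc

lemma card_perm_lt {n : ℕ} (ρ : Equiv.Perm (Fin n)) (k : ℕ) (hk : k ≤ n) :
    (Finset.univ.filter fun t => (ρ t : ℕ) < k).card = k := by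
  have himg : (Finset.univ.filter fun t : Fin n => (ρ t : ℕ) < k)
      = ((Finset.univ.filter fun v : Fin n => (v : ℕ) < k)).map ρ.symm.toEmbedding := by
    ext t
    simp only [Finset.mem_map, Finset.mem_filter, Finset.mem_univ, true_and,
      Equiv.coe_toEmbedding]
    constructor
    · intro h; exact ⟨ρ t, h, Equiv.symm_apply_apply ρ t⟩
    · rintro ⟨v, hv, rfl⟩; rwa [Equiv.apply_symm_apply]
  rw [himg, Finset.card_map]
  exact card_val_lt k hk

lemma invNum_le_sq {n : ℕ} (ρ : Equiv.Perm (Fin n)) : invNum ρ ≤ n * n := by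
  unfold invNum
  refine le_trans (Finset.card_filter_le _ _) ?_
  simp

lemma swap_char {n : ℕ} (τ : Equiv.Perm (Fin n)) (a b : Fin n) (j : ℕ)
    (ha : (a : ℕ) = j - 1) (hb : (b : ℕ) = j) (hj : 1 ≤ j) (t : Fin n) :
    ((t : ℕ) = (τ.symm a : ℕ) ∧ (τ t : ℕ) = j - 1 ∧ ((Equiv.swap a b * τ) t : ℕ) = j) ∨
    ((t : ℕ) = (τ.symm b : ℕ) ∧ (τ t : ℕ) = j ∧ ((Equiv.swap a b * τ) t : ℕ) = j - 1) ∨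
    ((t : ℕ) ≠ (τ.symm a : ℕ) ∧ (t : ℕ) ≠ (τ.symm b : ℕ) ∧
      ((Equiv.swap a b * τ) t : ℕ) = (τ t : ℕ) ∧ (τ t : ℕ) ≠ j - 1 ∧ (τ t : ℕ) ≠ j) := by
  have hab : a ≠ b := by
    intro h; rw [h, hb] at ha; omega
  by_cases h1 : t = τ.symm a
  · left
    refine ⟨by rw [h1], ?_, ?_⟩
    · rw [h1, Equiv.apply_symm_apply]; exact ha
    · rw [Equiv.Perm.mul_apply, h1, Equiv.apply_symm_apply, Equiv.swap_apply_left]; exact hb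
  · by_cases h2 : t = τ.symm b
    · right; left
      refine ⟨by rw [h2], ?_, ?_⟩
      · rw [h2, Equiv.apply_symm_apply]; exact hb
      · rw [Equiv.Perm.mul_apply, h2, Equiv.apply_symm_apply, Equiv.swap_apply_right]; exact ha
    · right; right
      have hta : τ t ≠ a := fun h => h1 (by rw [← h, Equiv.symm_apply_apply])
      have htb : τ t ≠ b := fun h => h2 (by rw [← h, Equiv.symm_apply_apply])
      refine ⟨fun hv => h1 (Fin.ext hv), fun hv => h2 (Fin.ext hv), ?_, ?_, ?_⟩
      · rw [Equiv.Perm.mul_apply, Equiv.swap_apply_of_ne_of_ne hta htb]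
      · intro hv; exact hta (Fin.ext (by rw [hv, ha]))
      · intro hv; exact htb (Fin.ext (by rw [hv, hb]))

lemma move_alt {n : ℕ} (τ : Equiv.Perm (Fin n)) (hτ : IsAlternating τ) (a b : Fin n) (j : ℕ)
    (ha : (a : ℕ) = j - 1) (hb : (b : ℕ) = j) (hj : 1 ≤ j)
    (hPQ : (τ.symm a : ℕ) + 1 < (τ.symm b : ℕ)) :
    IsAlternating (Equiv.swap a b * τ) := by
  intro i i' hadj
  obtain ⟨he, ho⟩ := hτ i i' hadj
  have hc1 := swap_char τ a b j ha hb hj i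
  have hc2 := swap_char τ a b j ha hb hj i'
  constructor
  · intro hev
    have h := he hev
    rw [Fin.lt_def] at h ⊢
    rcases hc1 with ⟨e1, e2, e3⟩ | ⟨e1, e2, e3⟩ | ⟨e1, e2, e3, e4, e5⟩ <;>
      rcases hc2 with ⟨f1, f2, f3⟩ | ⟨f1, f2, f3⟩ | ⟨f1, f2, f3, f4, f5⟩ <;> omega
  · intro hod
    have h := ho hod
    rw [Fin.lt_def] at h ⊢
    rcases hc1 with ⟨e1, e2, e3⟩ | ⟨e1, e2, e3⟩ | ⟨e1, e2, e3, e4, e5⟩ <;>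
      rcases hc2 with ⟨f1, f2, f3⟩ | ⟨f1, f2, f3⟩ | ⟨f1, f2, f3, f4, f5⟩ <;> omega

lemma move_inv {n : ℕ} (τ : Equiv.Perm (Fin n)) (a b : Fin n) (j : ℕ)
    (ha : (a : ℕ) = j - 1) (hb : (b : ℕ) = j) (hj : 1 ≤ j)
    (hPQ : (τ.symm a : ℕ) + 1 < (τ.symm b : ℕ)) :
    invNum (Equiv.swap a b * τ) = invNum τ + 1 := by
  have key : (Finset.univ.filter
        fun p : Fin n × Fin n => p.1 < p.2 ∧ (Equiv.swap a b * τ) p.2 < (Equiv.swap a b * τ) p.1)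
      = insert (τ.symm a, τ.symm b)
        (Finset.univ.filter fun p : Fin n × Fin n => p.1 < p.2 ∧ τ p.2 < τ p.1) := by
    ext ⟨p1, p2⟩
    have h1 := swap_char τ a b j ha hb hj p1
    have h2 := swap_char τ a b j ha hb hj p2
    simp only [Finset.mem_filter, Finset.mem_univ, true_and, Finset.mem_insert,
      Prod.mk.injEq, Fin.lt_def, Fin.ext_iff]
    omega
  rw [invNum, invNum, key, Finset.card_insert_of_notMem]
  intro hmem
  rw [Finset.mem_filter] at hmem
  have := hmem.2.2
  rw [Fin.lt_def] at this
  have hA : (τ (τ.symm a) : ℕ) = j - 1 := by rw [Equiv.apply_symm_apply]; exact ha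
  have hB : (τ (τ.symm b) : ℕ) = j := by rw [Equiv.apply_symm_apply]; exact hb
  simp only at this
  omega

lemma move_lt_iff {n : ℕ} (τ : Equiv.Perm (Fin n)) (a b : Fin n) (j : ℕ)
    (ha : (a : ℕ) = j - 1) (hb : (b : ℕ) = j) (hj : 1 ≤ j)
    (i : ℕ) (hij : i ≠ j) (t : Fin n) :
    (((Equiv.swap a b * τ) t : ℕ) < i ↔ (τ t : ℕ) < i) := by
  rcases swap_char τ a b j ha hb hj t with ⟨e1, e2, e3⟩ | ⟨e1, e2, e3⟩ | ⟨e1, e2, e3, e4, e5⟩ <;>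
    omega

end Aux

section Aux2

lemma lemA {n : ℕ} (σ : Equiv.Perm (Fin n)) (hσ : IsAlternating σ) (m g : ℕ)
    (hmg : m < g) (hgn : g ≤ n) (mlt : m < n)
    (T : Finset (Fin n)) (hT : ∀ t, t ∈ T ↔ m ≤ (σ t : ℕ) ∧ (σ t : ℕ) < g)
    (M : Fin n) (hMT : M ∈ T) (hMmax : ∀ t ∈ T, (t : ℕ) ≤ (M : ℕ))
    (ns : ∀ i i' (h2 : i < n) (h2' : i' < n), i' + 1 = i → m < i → i < g →
      (σ.symm ⟨i, h2⟩ : ℕ) ≤ (σ.symm ⟨i', h2'⟩ : ℕ) + 1) :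
    ((σ.symm ⟨m, mlt⟩ : ℕ) = (M : ℕ) ∧
      ¬((M : ℕ) % 2 = 1 ∧ ∃ t ∈ T, (t : ℕ) + 1 = (M : ℕ))) ∨
    ((σ.symm ⟨m, mlt⟩ : ℕ) + 1 = (M : ℕ) ∧
      ((M : ℕ) % 2 = 1 ∧ ∃ t ∈ T, (t : ℕ) + 1 = (M : ℕ))) := by
  obtain ⟨hMm, hMg⟩ := (hT M).mp hMT
  by_cases hJ : (σ M : ℕ) = m
  · left
    have hpM : σ.symm ⟨m, mlt⟩ = M := by
      have hMe : σ M = ⟨m, mlt⟩ := Fin.ext hJ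
      rw [← hMe, Equiv.symm_apply_apply]
    refine ⟨by rw [hpM], ?_⟩
    rintro ⟨hodd, t, htT, ht1⟩
    obtain ⟨htm, htg⟩ := (hT t).mp htT
    have halt := hσ t M (by omega)
    have heven : Even (t : ℕ) := by rw [Nat.even_iff]; omega
    have hlt := halt.1 heven
    rw [Fin.lt_def] at hlt
    omega
  · have hJm : m < (σ M : ℕ) := by omega
    have hJn : (σ M : ℕ) < n := by omega
    have hJ1n : (σ M : ℕ) - 1 < n := by omega
    have hsymmJ : σ.symm ⟨(σ M : ℕ), hJn⟩ = M := by
      have hMe : σ M = ⟨(σ M : ℕ), hJn⟩ := Fin.ext rfl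
      rw [← hMe, Equiv.symm_apply_apply]
    have hns := ns (σ M : ℕ) ((σ M : ℕ) - 1) hJn hJ1n (by omega) hJm hMg
    rw [hsymmJ] at hns
    have htv : (σ (σ.symm ⟨(σ M : ℕ) - 1, hJ1n⟩) : ℕ) = (σ M : ℕ) - 1 := by
      rw [Equiv.apply_symm_apply]
    have htT : σ.symm ⟨(σ M : ℕ) - 1, hJ1n⟩ ∈ T := (hT _).mpr (by rw [htv]; omega)
    have htle : (σ.symm ⟨(σ M : ℕ) - 1, hJ1n⟩ : ℕ) ≤ (M : ℕ) := hMmax _ htT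
    have htne : (σ.symm ⟨(σ M : ℕ) - 1, hJ1n⟩ : ℕ) ≠ (M : ℕ) := by
      intro h
      have : σ.symm ⟨(σ M : ℕ) - 1, hJ1n⟩ = M := Fin.ext h
      rw [this] at htv
      omega
    have htM : (σ.symm ⟨(σ M : ℕ) - 1, hJ1n⟩ : ℕ) + 1 = (M : ℕ) := by omega
    have halt := hσ (σ.symm ⟨(σ M : ℕ) - 1, hJ1n⟩) M (by omega)
    have hnoddt : ¬ Odd ((σ.symm ⟨(σ M : ℕ) - 1, hJ1n⟩ : Fin n) : ℕ) := by
      intro hoddt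
      have hlt := halt.2 hoddt
      rw [Fin.lt_def] at hlt
      omega
    rw [Nat.odd_iff] at hnoddt
    have hodd : (M : ℕ) % 2 = 1 := by omega
    have hJ1 : (σ M : ℕ) - 1 = m := by
      by_contra hne'
      have hm2 : m < (σ M : ℕ) - 1 := by omega
      have hJ2n : (σ M : ℕ) - 2 < n := by omega
      have hns2 := ns ((σ M : ℕ) - 1) ((σ M : ℕ) - 2) hJ1n hJ2n (by omega) hm2 (by omega)
      have huv : (σ (σ.symm ⟨(σ M : ℕ) - 2, hJ2n⟩) : ℕ) = (σ M : ℕ) - 2 := by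
        rw [Equiv.apply_symm_apply]
      have huT : σ.symm ⟨(σ M : ℕ) - 2, hJ2n⟩ ∈ T := (hT _).mpr (by rw [huv]; omega)
      have hule : (σ.symm ⟨(σ M : ℕ) - 2, hJ2n⟩ : ℕ) ≤ (M : ℕ) := hMmax _ huT
      have huneM : (σ.symm ⟨(σ M : ℕ) - 2, hJ2n⟩ : ℕ) ≠ (M : ℕ) := by
        intro h
        have : σ.symm ⟨(σ M : ℕ) - 2, hJ2n⟩ = M := Fin.ext h
        rw [this] at huv
        omega
      have hunet : (σ.symm ⟨(σ M : ℕ) - 2, hJ2n⟩ : ℕ) ≠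
          (σ.symm ⟨(σ M : ℕ) - 1, hJ1n⟩ : ℕ) := by
        intro h
        have : σ.symm ⟨(σ M : ℕ) - 2, hJ2n⟩ = σ.symm ⟨(σ M : ℕ) - 1, hJ1n⟩ := Fin.ext h
        rw [this] at huv
        omega
      have huval : (σ.symm ⟨(σ M : ℕ) - 2, hJ2n⟩ : ℕ) + 1 =
          (σ.symm ⟨(σ M : ℕ) - 1, hJ1n⟩ : ℕ) := by omega
      have halt2 := hσ (σ.symm ⟨(σ M : ℕ) - 2, hJ2n⟩) (σ.symm ⟨(σ M : ℕ) - 1, hJ1n⟩)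
        (by omega)
      have hnoddu : ¬ Odd ((σ.symm ⟨(σ M : ℕ) - 2, hJ2n⟩ : Fin n) : ℕ) := by
        intro hoddu
        have hlt := halt2.2 hoddu
        rw [Fin.lt_def] at hlt
        omega
      rw [Nat.odd_iff] at hnoddu
      omega
    right
    have hfin : (⟨m, mlt⟩ : Fin n) = ⟨(σ M : ℕ) - 1, hJ1n⟩ := Fin.ext (by simp; omega)
    rw [hfin]
    exact ⟨htM, hodd, _, htT, htM⟩

lemma symm_eq_of_ne {n : ℕ} {σ τ : Equiv.Perm (Fin n)} (hne : σ ≠ τ) :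
    ∃ v, ∃ h : v < n, σ.symm ⟨v, h⟩ ≠ τ.symm ⟨v, h⟩ := by
  by_contra hc
  push_neg at hc
  apply hne
  have hsymm : σ.symm = τ.symm := by
    apply Equiv.ext
    intro x
    have := hc (x : ℕ) x.isLt
    simpa using this
  calc σ = σ.symm.symm := (Equiv.symm_symm σ).symm
    _ = τ.symm.symm := by rw [hsymm]
    _ = τ := Equiv.symm_symm τ

lemma KL {n : ℕ} (σ τ : Equiv.Perm (Fin n)) (hσ : IsAlternating σ) (hτ : IsAlternating τ)
    (H : ∀ j, IsSwap σ j → sameA σ τ j) (hne : σ ≠ τ) :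
    ∃ j, IsSwap τ j ∧ ¬ sameA σ τ j := by
  by_contra hcon
  push_neg at hcon
  classical
  have hPm : ∃ v, ∃ h : v < n, σ.symm ⟨v, h⟩ ≠ τ.symm ⟨v, h⟩ := symm_eq_of_ne hne
  set m := Nat.find hPm with hmdef
  obtain ⟨mlt, hmne⟩ := Nat.find_spec hPm
  have hmmin : ∀ v, v < m → ∀ h : v < n, σ.symm ⟨v, h⟩ = τ.symm ⟨v, h⟩ := by
    intro v hv h
    by_contra hne'
    exact Nat.find_min hPm hv ⟨h, hne'⟩
  have happ1 : ∀ t : Fin n, (σ t : ℕ) < m → τ t = σ t := by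
    intro t h
    have heq2 : σ.symm (σ t) = τ.symm (σ t) := hmmin (σ t : ℕ) h (σ t).isLt
    rw [Equiv.symm_apply_apply] at heq2
    exact (Equiv.apply_eq_iff_eq_symm_apply τ).mpr heq2
  have happ2 : ∀ t : Fin n, (τ t : ℕ) < m → σ t = τ t := by
    intro t h
    have heq2 : σ.symm (τ t) = τ.symm (τ t) := hmmin (τ t : ℕ) h (τ t).isLt
    rw [Equiv.symm_apply_apply] at heq2
    exact (Equiv.apply_eq_iff_eq_symm_apply σ).mpr heq2.symm
  have hsameA_le : ∀ i, i ≤ m → sameA σ τ i := by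
    intro i hi t
    constructor
    · intro h
      rw [happ1 t (lt_of_lt_of_le h hi)]
      exact h
    · intro h
      rw [happ2 t (lt_of_lt_of_le h hi)]
      exact h
  have hsmn : sameA σ τ n := fun t => by
    constructor <;> intro _ <;> [exact (τ t).isLt; exact (σ t).isLt]
  have hgex : ∃ g', m < g' ∧ sameA σ τ g' := ⟨n, mlt, hsmn⟩
  set g := Nat.find hgex with hgdef
  obtain ⟨hmg, hsg⟩ := Nat.find_spec hgex
  have hgmin : ∀ i, m < i → i < g → ¬ sameA σ τ i :=
    fun i h1 h2 hs => Nat.find_min hgex h2 ⟨h1, hs⟩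
  have hgn : g ≤ n := Nat.find_min' hgex ⟨mlt, hsmn⟩
  have hsm : sameA σ τ m := hsameA_le m le_rfl
  have nsσ : ∀ i i' (h2 : i < n) (h2' : i' < n), i' + 1 = i → m < i → i < g →
      (σ.symm ⟨i, h2⟩ : ℕ) ≤ (σ.symm ⟨i', h2'⟩ : ℕ) + 1 := by
    intro i i' h2 h2' hii' h1 hig
    by_contra hlt
    push_neg at hlt
    have hsw : IsSwap σ i := ⟨⟨i', h2'⟩, ⟨i, h2⟩, by simpa using hii', rfl, by omega⟩
    exact hgmin i h1 hig (H i hsw)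
  have nsτ : ∀ i i' (h2 : i < n) (h2' : i' < n), i' + 1 = i → m < i → i < g →
      (τ.symm ⟨i, h2⟩ : ℕ) ≤ (τ.symm ⟨i', h2'⟩ : ℕ) + 1 := by
    intro i i' h2 h2' hii' h1 hig
    by_contra hlt
    push_neg at hlt
    have hsw : IsSwap τ i := ⟨⟨i', h2'⟩, ⟨i, h2⟩, by simpa using hii', rfl, by omega⟩
    exact hgmin i h1 hig (hcon i hsw)
  set T : Finset (Fin n) :=
    Finset.univ.filter (fun t => m ≤ (σ t : ℕ) ∧ (σ t : ℕ) < g) with hTdef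
  have hTσ : ∀ t, t ∈ T ↔ m ≤ (σ t : ℕ) ∧ (σ t : ℕ) < g := by
    intro t; simp [hTdef]
  have hTτ : ∀ t, t ∈ T ↔ m ≤ (τ t : ℕ) ∧ (τ t : ℕ) < g := by
    intro t
    rw [hTσ t]
    have h1 := hsm t
    have h2 := hsg t
    omega
  have hTne : T.Nonempty := by
    refine ⟨σ.symm ⟨m, mlt⟩, (hTσ _).mpr ?_⟩
    rw [Equiv.apply_symm_apply]
    exact ⟨le_rfl, hmg⟩
  set M := T.max' hTne with hMdef
  have hMT : M ∈ T := T.max'_mem hTne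
  have hMmax : ∀ t ∈ T, (t : ℕ) ≤ (M : ℕ) := fun t ht => T.le_max' t ht
  have A1 := lemA σ hσ m g hmg hgn mlt T hTσ M hMT hMmax nsσ
  have A2 := lemA τ hτ m g hmg hgn mlt T hTτ M hMT hMmax nsτ
  have hval : (σ.symm ⟨m, mlt⟩ : ℕ) = (τ.symm ⟨m, mlt⟩ : ℕ) := by
    rcases A1 with ⟨e1, g1⟩ | ⟨e1, g1⟩ <;> rcases A2 with ⟨e2, g2⟩ | ⟨e2, g2⟩
    · omega
    · exact absurd g2 g1
    · exact absurd g1 g2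
    · omega
  exact hmne (Fin.ext hval)

end Aux2

section Aux3

lemma main_ind {n : ℕ} (σ : Equiv.Perm (Fin n)) (hσ : IsAlternating σ) :
    ∀ N (τ : Equiv.Perm (Fin n)), IsAlternating τ → (∀ j, IsSwap σ j → sameA σ τ j) →
      σ ≠ τ → n * n ≤ invNum τ + N → invNum τ < invNum σ := by
  intro N
  induction N with
  | zero =>
    intro τ hτ H hne hb
    obtain ⟨j, hswj, _⟩ := KL σ τ hσ hτ H hne
    obtain ⟨h1, h2, hlt⟩ := (isSwap_iff τ j).mp hswj
    have hinv' := move_inv τ ⟨j - 1, by omega⟩ ⟨j, h2⟩ j rfl rfl h1 hlt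
    have hle := invNum_le_sq (Equiv.swap (⟨j - 1, by omega⟩ : Fin n) ⟨j, h2⟩ * τ)
    omega
  | succ N ih =>
    intro τ hτ H hne hb
    obtain ⟨j, hswj, hnsame⟩ := KL σ τ hσ hτ H hne
    obtain ⟨h1, h2, hlt⟩ := (isSwap_iff τ j).mp hswj
    have hinv' := move_inv τ ⟨j - 1, by omega⟩ ⟨j, h2⟩ j rfl rfl h1 hlt
    have halt' := move_alt τ hτ ⟨j - 1, by omega⟩ ⟨j, h2⟩ j rfl rfl h1 hlt
    have hH' : ∀ i, IsSwap σ i →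
        sameA σ (Equiv.swap (⟨j - 1, by omega⟩ : Fin n) ⟨j, h2⟩ * τ) i := by
      intro i hsw
      have hij : i ≠ j := by
        intro h
        exact hnsame (h ▸ H i hsw)
      intro t
      exact (H i hsw t).trans
        (move_lt_iff τ ⟨j - 1, by omega⟩ ⟨j, h2⟩ j rfl rfl h1 i hij t).symm
    by_cases heq : σ = Equiv.swap (⟨j - 1, by omega⟩ : Fin n) ⟨j, h2⟩ * τ
    · rw [heq, hinv']; omega
    · have := ih (Equiv.swap (⟨j - 1, by omega⟩ : Fin n) ⟨j, h2⟩ * τ) halt' hH' heq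
        (by omega)
      omega

end Aux3


/-- distinct alternating permutations with equal inversion number: the
exclusion set of one is not contained in the vertex set of the other. -/
theorem excl_not_subset_of_eq_invNum (n : ℕ) (σ τ : Equiv.Perm (Fin n))
    (hσ : IsAlternating σ) (hτ : IsAlternating τ) (hne : σ ≠ τ)
    (hinv : invNum σ = invNum τ) : ¬ excl σ ⊆ vert τ := by
  intro hsub
  have H : ∀ j, IsSwap σ j → sameA σ τ j := by
    intro j hsw
    obtain ⟨h1, h2, _⟩ := (isSwap_iff σ j).mp hsw
    have hmem : vtx σ j ∈ excl σ :=
      Finset.mem_image.mpr ⟨j, Finset.mem_filter.mpr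
        ⟨Finset.mem_range.mpr (by omega), hsw⟩, rfl⟩
    obtain ⟨l, hl, heq⟩ := Finset.mem_image.mp (hsub hmem)
    have hl' : l ≤ n := by
      have := Finset.mem_range.mp hl
      omega
    have hpt : ∀ t, ((τ t : ℕ) < l ↔ (σ t : ℕ) < j) := by
      intro t
      have hc := congrFun heq t
      simp only [vtx] at hc
      by_cases hA : (τ t : ℕ) < l <;> by_cases hB : (σ t : ℕ) < j <;>
        simp [hA, hB] at hc <;> tauto
    have hfe : (Finset.univ.filter fun t => (τ t : ℕ) < l)
        = Finset.univ.filter fun t => (σ t : ℕ) < j := by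
      ext t
      simp only [Finset.mem_filter, Finset.mem_univ, true_and]
      exact hpt t
    have hlj : l = j := by
      rw [← card_perm_lt τ l hl', ← card_perm_lt σ j (le_of_lt h2), hfe]
    intro t
    subst hlj
    exact (hpt t).symm
  have := main_ind σ hσ (n * n) τ hτ H hne (by omega)
  omega
end
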